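/- arXiv:2308.13193 — 4 statements merged into one kernel-verified Lean document; each statement's English description precedes it below -/
import Mathlib

section
/- Let d ≥ 2, let r > 1 be real, and let B ∈ P^d_∂ with rad(B) ≥ r. Then #B ≥ (2(d−1)/√d)·r; consequently, the uniform probability measure μ_B on B satisfies μ_B({z}) = 1/#B ≤ (√d/(2(d−1)))·r^{−1} for every z ∈ B. -/
open MeasureTheory Filter

/-- Euclidean norm of a lattice point. -/
noncomputable def zNorm {d : ℕ} (x : Fin d → ℤ) : ℝ :=
  Real.sqrt (∑ i, ((x i : ℝ)) ^ 2)

/-- Two lattice points are adjacent (nearest neighbours) if their Euclidean distance is 1. -/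
def adjPt {d : ℕ} (x y : Fin d → ℤ) : Prop := zNorm (x - y) = 1

/-- The radius of a finite set: the maximal Euclidean norm of its points. -/
noncomputable def rad {d : ℕ} (A : Finset (Fin d → ℤ)) : ℝ :=
  if h : A.Nonempty then A.sup' h zNorm else 0

/-- A finite set is connected in the nearest-neighbour graph on `ℤ^d`. -/
def IsConnCluster {d : ℕ} (A : Finset (Fin d → ℤ)) : Prop :=
  ∀ x ∈ A, ∀ y ∈ A,
    Relation.ReflTransGen (fun a b => a ∈ A ∧ b ∈ A ∧ adjPt a b) x y

/-- The outer boundary of a set `A ⊆ ℤ^d`: the points outside `A` adjacent to a point of `A`. -/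
def obdry {d : ℕ} (A : Set (Fin d → ℤ)) : Set (Fin d → ℤ) :=
  {y | y ∉ A ∧ ∃ x ∈ A, adjPt x y}

/-- `B ∈ P^d_∂`: `B` is the outer boundary of some finite connected set containing `0`. -/
def IsOuterBdry {d : ℕ} (B : Finset (Fin d → ℤ)) : Prop :=
  ∃ A : Finset (Fin d → ℤ), IsConnCluster A ∧ (0 : Fin d → ℤ) ∈ A ∧
    (B : Set (Fin d → ℤ)) = obdry (A : Set (Fin d → ℤ))

/-- A family of probability distributions `μ_A` supported on `A`,
for each finite nonempty `A ⊆ ℤ^d`. -/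
def IsDistFamily {d : ℕ} (μ : Set (Fin d → ℤ) → (Fin d → ℤ) → ℝ) : Prop :=
  ∀ A : Set (Fin d → ℤ), A.Finite → A.Nonempty →
    (∀ z, 0 ≤ μ A z) ∧ (∀ z, z ∉ A → μ A z = 0) ∧ (∑' z, μ A z = 1)

/-- `(F_n)` with attachment points `(y_n)` is incremental aggregation with distribution
family `μ`: `F_1 = {0}` and `y_1 = 0` a.s., `F_{n+1} = F_n ∪ {y_{n+1}}`, and given
`F_n = A` the point `y_{n+1}` is distributed according to `μ_{∂A}`. -/
def IsIncrementalAggregation {d : ℕ} {Ω : Type*} [MeasurableSpace Ω]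
    (P : Measure Ω) (μ : Set (Fin d → ℤ) → (Fin d → ℤ) → ℝ)
    (F : ℕ → Ω → Finset (Fin d → ℤ)) (y : ℕ → Ω → (Fin d → ℤ)) : Prop :=
  (∀ᵐ ω ∂P, F 1 ω = {0} ∧ y 1 ω = 0) ∧
  (∀ n : ℕ, 1 ≤ n → ∀ ω, F (n + 1) ω = insert (y (n + 1) ω) (F n ω)) ∧
  (∀ n : ℕ, 1 ≤ n → ∀ A : Finset (Fin d → ℤ), ∀ v : Fin d → ℤ,
    P ({ω | y (n + 1) ω = v} ∩ {ω | F n ω = A}) =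
      ENNReal.ofReal (μ (obdry (A : Set (Fin d → ℤ))) v) * P {ω | F n ω = A})



lemma adj_sum_sq {d : ℕ} {x y : Fin d → ℤ} (h : adjPt x y) :
    ∑ i, (x i - y i) ^ 2 = 1 := by
  have h1 : Real.sqrt (∑ i, (((x - y) i : ℝ)) ^ 2) = 1 := h
  have hnn : 0 ≤ ∑ i, (((x - y) i : ℝ)) ^ 2 :=
    Finset.sum_nonneg fun i _ => sq_nonneg _
  have h2 : (∑ i, (((x - y) i : ℝ)) ^ 2) = 1 := by
    nlinarith [Real.sq_sqrt hnn]
  have h3 : ((∑ i, (x i - y i) ^ 2 : ℤ) : ℝ) = ∑ i, (((x - y) i : ℝ)) ^ 2 := by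
    push_cast [Pi.sub_apply]
    exact Finset.sum_congr rfl fun i _ => by ring
  exact_mod_cast h3.trans h2

lemma adj_coord {d : ℕ} {x y : Fin d → ℤ} (h : adjPt x y) (i : Fin d) :
    (x i - y i) ^ 2 ≤ 1 := by
  rw [← adj_sum_sq h]
  exact Finset.single_le_sum (f := fun j => (x j - y j) ^ 2)
    (fun j _ => sq_nonneg _) (Finset.mem_univ i)

lemma adj_coord_abs {d : ℕ} {x y : Fin d → ℤ} (h : adjPt x y) (i : Fin d) :
    |x i - y i| ≤ 1 := by
  have := adj_coord h i
  refine abs_le.mpr ⟨by nlinarith, by nlinarith⟩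

lemma reach_lemma {d : ℕ} {A : Finset (Fin d → ℤ)} (k : Fin d) {u v : Fin d → ℤ}
    (h : Relation.ReflTransGen (fun a b => a ∈ A ∧ b ∈ A ∧ adjPt a b) u v)
    (hu : u ∈ A) :
    ∀ t : ℤ, min (u k) (v k) ≤ t → t ≤ max (u k) (v k) → ∃ a ∈ A, a k = t := by
  induction h with
  | refl =>
    intro t h1 h2
    exact ⟨u, hu, by omega⟩
  | tail hbc hstep ih =>
    rename_i b c
    intro t h1 h2
    obtain ⟨hbA, hcA, hadj⟩ := hstep
    have habs : |b k - c k| ≤ 1 := adj_coord_abs hadj k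
    rw [abs_le] at habs
    by_cases hcase : min (u k) (b k) ≤ t ∧ t ≤ max (u k) (b k)
    · exact ih t hcase.1 hcase.2
    · exact ⟨c, hcA, by omega⟩

lemma walk_lemma {d : ℕ} {A : Finset (Fin d → ℤ)} {a : Fin d → ℤ} (ha : a ∈ A)
    (i : Fin d) (ε : ℤ) (hε : ε = 1 ∨ ε = -1) :
    ∃ b, b ∈ obdry (A : Set (Fin d → ℤ)) ∧ (∀ j, j ≠ i → b j = a j) ∧
      ∃ n : ℤ, 1 ≤ n ∧ b i = a i + ε * n := by
  classical
  have hε0 : ε ≠ 0 := by rcases hε with h | h <;> simp [h]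
  set f : ℕ → Fin d → ℤ := fun n => Function.update a i (a i + ε * n) with hf
  have hf0 : f 0 = a := by
    simp [hf, Function.update_eq_self_iff]
  have hex : ∃ n, f n ∉ A := by
    by_contra hc
    push_neg at hc
    have hinj : Function.Injective f := by
      intro m n hmn
      have h1 := congrFun hmn i
      simp only [hf, Function.update_self] at h1
      have : (m : ℤ) = n := by
        have := mul_left_cancel₀ hε0 (by linarith : ε * (m : ℤ) = ε * n)
        exact this
      exact_mod_cast this
    exact (A.finite_toSet).not_infinite
      (Set.infinite_of_injective_forall_mem hinj (fun n => hc n))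
  set n₀ := Nat.find hex with hn₀
  have hn₀A : f n₀ ∉ A := Nat.find_spec hex
  have hn₀pos : 1 ≤ n₀ := by
    rcases Nat.eq_zero_or_pos n₀ with h | h
    · exfalso; apply hn₀A; rw [h, hf0]; exact ha
    · exact h
  have hprevA : f (n₀ - 1) ∈ A := by
    by_contra hc
    exact absurd (Nat.find_min hex (by omega : n₀ - 1 < n₀)) (by simpa using hc)
  have hdiff : ∀ j, (f (n₀ - 1) - f n₀) j = if j = i then -ε else 0 := by
    intro j
    by_cases hj : j = i
    · subst hj
      simp only [Pi.sub_apply, hf, Function.update_self]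
      have : ((n₀ - 1 : ℕ) : ℤ) = (n₀ : ℤ) - 1 := by
        push_cast [Nat.cast_sub hn₀pos]; ring
      rw [this]; simp only [if_true]; ring
    · rw [if_neg hj]; simp [Pi.sub_apply, hf, Function.update_of_ne hj]
  have hadj : adjPt (f (n₀ - 1)) (f n₀) := by
    unfold adjPt zNorm
    have : ∀ j : Fin d, (((f (n₀ - 1) - f n₀) j : ℝ)) ^ 2
        = if j = i then ((ε : ℝ)) ^ 2 else 0 := by
      intro j
      rw [hdiff j]
      by_cases hj : j = i <;> simp [hj]
    rw [Finset.sum_congr rfl fun j _ => this j, Finset.sum_ite_eq' Finset.univ i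
      (fun _ => ((ε : ℝ)) ^ 2)]
    rcases hε with h | h <;> simp [h]
  refine ⟨f n₀, ⟨by simpa using hn₀A, f (n₀ - 1), by simpa using hprevA, hadj⟩, ?_, ?_⟩
  · intro j hj
    simp [hf, Function.update_of_ne hj]
  · refine ⟨(n₀ : ℤ), by exact_mod_cast hn₀pos, ?_⟩
    simp [hf, Function.update_self]

/-- every outer boundary set `B ∈ P^d_∂` with `rad(B) ≥ r > 1` has at least
`(2(d-1)/√d)·r` points, hence the uniform measure on `B` has atoms of mass at most
`(√d/(2(d-1)))·r⁻¹`. -/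
theorem stmt3 {d : ℕ} (hd : 2 ≤ d) (r : ℝ) (hr : 1 < r)
    (B : Finset (Fin d → ℤ)) (hB : IsOuterBdry B) (hrad : r ≤ rad B) :
    (2 * ((d : ℝ) - 1) / Real.sqrt d) * r ≤ (B.card : ℝ) ∧
    ∀ z ∈ B, (1 : ℝ) / (B.card : ℝ) ≤ (Real.sqrt d / (2 * ((d : ℝ) - 1))) * r⁻¹ := by
  classical
  obtain ⟨A, hconn, h0A, hBA⟩ := hB
  -- B is nonempty
  have hBne : B.Nonempty := by
    by_contra h
    rw [Finset.not_nonempty_iff_eq_empty] at h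
    rw [rad, dif_neg (by simp [h])] at hrad
    linarith
  -- get y of maximal norm
  obtain ⟨y, hyB, hy⟩ := Finset.exists_mem_eq_sup' hBne zNorm
  have hyr : r ≤ zNorm y := by
    rw [rad, dif_pos hBne] at hrad
    rw [← hy]; exact hrad
  -- y in the outer boundary
  have hyO : y ∈ obdry (A : Set (Fin d → ℤ)) := by
    rw [← hBA]; exact hyB
  obtain ⟨hyA, x, hxA, hxy⟩ := hyO
  -- choose maximal coordinate of y
  obtain ⟨k, -, hk⟩ := Finset.exists_max_image Finset.univ (fun i => (y i) ^ 2)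
    ⟨⟨0, by omega⟩, Finset.mem_univ _⟩
  -- r ≤ √d * |y k|
  have hnnS : 0 ≤ ∑ i, ((y i : ℝ)) ^ 2 := Finset.sum_nonneg fun i _ => sq_nonneg _
  have hsumr : r ^ 2 ≤ ∑ i, ((y i : ℝ)) ^ 2 := by
    have h1 : r ≤ Real.sqrt (∑ i, ((y i : ℝ)) ^ 2) := hyr
    nlinarith [Real.sq_sqrt hnnS]
  have hkd : ∑ i, ((y i : ℝ)) ^ 2 ≤ (d : ℝ) * ((y k : ℝ)) ^ 2 := by
    calc ∑ i, ((y i : ℝ)) ^ 2 ≤ ∑ _i : Fin d, ((y k : ℝ)) ^ 2 :=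
          Finset.sum_le_sum fun i _ => by exact_mod_cast hk i (Finset.mem_univ i)
      _ = (d : ℝ) * ((y k : ℝ)) ^ 2 := by
          rw [Finset.sum_const, Finset.card_univ, Fintype.card_fin, nsmul_eq_mul]
  have hky : r ≤ Real.sqrt d * |(y k : ℝ)| := by
    have h1 : r ≤ Real.sqrt ((d : ℝ) * ((y k : ℝ)) ^ 2) := by
      calc r = Real.sqrt (r ^ 2) := (Real.sqrt_sq (by linarith)).symm
        _ ≤ _ := Real.sqrt_le_sqrt (by linarith)
    rwa [Real.sqrt_mul (by positivity), Real.sqrt_sq_eq_abs] at h1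
  -- |y k| ≤ |x k| + 1
  have hxyk : |y k| ≤ |x k| + 1 := by
    have h1 := adj_coord_abs hxy k
    have h2 : |y k| - |x k| ≤ |x k - y k| := by
      rw [abs_sub_comm]
      exact abs_sub_abs_le_abs_sub _ _
    linarith
  set m : ℤ := min 0 (x k) with hm
  set M : ℤ := max 0 (x k) with hM
  have hMm : |x k| = M - m := by
    rcases le_or_gt 0 (x k) with h | h
    · rw [abs_of_nonneg h]; omega
    · rw [abs_of_neg h]; omega
  -- every level between m and M is attained in A
  have hreach : ∀ t ∈ Finset.Icc m M, ∃ a ∈ A, a k = t := by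
    intro t ht
    rw [Finset.mem_Icc] at ht
    have := reach_lemma k (hconn 0 h0A x hxA) h0A t
    simp only [Pi.zero_apply] at this
    exact this ht.1 ht.2
  choose! af hafA hafk using hreach
  -- for each (t, i, s) get a boundary point
  set S : Finset (ℤ × Fin d × Bool) :=
    (Finset.Icc m M) ×ˢ ((Finset.univ.erase k) ×ˢ (Finset.univ : Finset Bool)) with hS
  have hmem : ∀ p : ℤ × Fin d × Bool, p ∈ S → p.1 ∈ Finset.Icc m M ∧ p.2.1 ≠ k := by
    intro p hp
    rw [hS, Finset.mem_product, Finset.mem_product] at hp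
    exact ⟨hp.1, (Finset.mem_erase.mp hp.2.1).1⟩
  have hbch : ∀ p : ℤ × Fin d × Bool, p ∈ S →
      ∃ b, b ∈ obdry (A : Set (Fin d → ℤ)) ∧ (∀ j, j ≠ p.2.1 → b j = af p.1 j) ∧
        ∃ n : ℤ, 1 ≤ n ∧ b p.2.1 = af p.1 p.2.1 + (if p.2.2 then 1 else -1) * n := by
    intro p hp
    exact walk_lemma (hafA p.1 (hmem p hp).1) p.2.1 _ (by cases p.2.2 <;> simp)
  choose! bf hbO hbj hbn using hbch
  -- injectivity
  have hcard : S.card ≤ B.card := by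
    apply Finset.card_le_card_of_injOn bf
    · intro p hp
      have := hbO p hp
      rw [← hBA] at this
      exact_mod_cast this
    · intro p hp q hq heq
      obtain ⟨hpI, hpk⟩ := hmem p hp
      obtain ⟨hqI, hqk⟩ := hmem q hq
      -- coordinate k gives p.1 = q.1
      have hpk1 : bf p k = p.1 := by
        rw [hbj p hp k (Ne.symm hpk), hafk p.1 hpI]
      have hqk1 : bf q k = q.1 := by
        rw [hbj q hq k (Ne.symm hqk), hafk q.1 hqI]
      have h1 : p.1 = q.1 := by rw [← hpk1, ← hqk1, heq]
      -- direction coordinate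
      obtain ⟨np, hnp, hbp⟩ := hbn p hp
      obtain ⟨nq, hnq, hbq⟩ := hbn q hq
      have h2 : p.2.1 = q.2.1 := by
        by_contra hne
        have e1 : bf p q.2.1 = af p.1 q.2.1 := hbj p hp q.2.1 (fun h => hne h.symm)
        have e2 : bf q q.2.1 = af q.1 q.2.1 + (if q.2.2 then 1 else -1) * nq := hbq
        rw [heq, e2, ← h1] at e1
        rcases Bool.eq_false_or_eq_true q.2.2 with h | h <;> rw [h] at e1 <;>
          simp at e1 <;> omega
      have h3 : p.2.2 = q.2.2 := by
        by_contra hne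
        have e1 : bf p p.2.1 = af p.1 p.2.1 + (if p.2.2 then 1 else -1) * np := hbp
        have e2 : bf q p.2.1 = af p.1 p.2.1 + (if q.2.2 then 1 else -1) * nq := by
          rw [h2] at e1 ⊢
          rw [hbq, h1]
        rw [heq, e2] at e1
        rcases Bool.eq_false_or_eq_true q.2.2 with h | h <;>
          rcases Bool.eq_false_or_eq_true p.2.2 with h' | h' <;>
            rw [h, h'] at e1 hne <;> simp at e1 hne ⊢ <;> omega
      exact Prod.ext h1 (Prod.ext h2 h3)
  -- size of S
  have hScard : S.card = (M - m + 1).toNat * ((d - 1) * 2) := by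
    rw [hS, Finset.card_product, Finset.card_product, Int.card_Icc,
      Finset.card_erase_of_mem (Finset.mem_univ k), Finset.card_univ,
      Finset.card_univ, Fintype.card_fin, Fintype.card_bool]
    ring_nf
  -- numeric conclusion
  have hmM : m ≤ M := by rw [hm, hM]; omega
  have hcardR : 2 * ((d : ℝ) - 1) * ((M : ℝ) - m + 1) ≤ (B.card : ℝ) := by
    have h1 : ((S.card : ℕ) : ℝ) ≤ (B.card : ℝ) := by exact_mod_cast hcard
    rw [hScard] at h1
    have h2 : (((M - m + 1).toNat : ℕ) : ℝ) = (M : ℝ) - m + 1 := by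
      rw [show (((M - m + 1).toNat : ℕ) : ℝ) = (((M - m + 1).toNat : ℤ) : ℝ) by push_cast; ring,
        Int.toNat_of_nonneg (by omega : (0:ℤ) ≤ M - m + 1)]
      push_cast; ring
    rw [Nat.cast_mul, Nat.cast_mul, Nat.cast_sub (by omega : 1 ≤ d), h2] at h1
    push_cast at h1
    linarith
  have hyk1 : |(y k : ℝ)| ≤ (M : ℝ) - m + 1 := by
    have : |y k| ≤ M - m + 1 := by rw [← hMm]; omega
    calc |(y k : ℝ)| = ((|y k| : ℤ) : ℝ) := by push_cast; rfl
      _ ≤ _ := by exact_mod_cast this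
  have hd1 : (1 : ℝ) ≤ (d : ℝ) - 1 := by
    have : (2 : ℝ) ≤ d := by exact_mod_cast hd
    linarith
  have hsd : (0 : ℝ) < Real.sqrt d := Real.sqrt_pos.mpr (by positivity)
  have part1 : (2 * ((d : ℝ) - 1) / Real.sqrt d) * r ≤ (B.card : ℝ) := by
    rw [div_mul_eq_mul_div, div_le_iff₀ hsd]
    have h1 : 2 * ((d : ℝ) - 1) * r ≤ 2 * ((d : ℝ) - 1) * (Real.sqrt d * |(y k : ℝ)|) := by
      apply mul_le_mul_of_nonneg_left hky (by linarith)
    have h2 : 2 * ((d : ℝ) - 1) * |(y k : ℝ)| ≤ (B.card : ℝ) := by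
      have := mul_le_mul_of_nonneg_left hyk1 (by linarith : (0:ℝ) ≤ 2 * ((d : ℝ) - 1))
      linarith
    nlinarith [abs_nonneg ((y k : ℝ))]
  refine ⟨part1, fun z _ => ?_⟩
  have hcr : 0 < (2 * ((d : ℝ) - 1) / Real.sqrt d) * r := by positivity
  have h1 : (1 : ℝ) / (B.card : ℝ) ≤ 1 / ((2 * ((d : ℝ) - 1) / Real.sqrt d) * r) :=
    one_div_le_one_div_of_le hcr part1
  have h2 : (1 : ℝ) / ((2 * ((d : ℝ) - 1) / Real.sqrt d) * r)
      = (Real.sqrt d / (2 * ((d : ℝ) - 1))) * r⁻¹ := by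
    field_simp
  linarith
end

section
/- Let a > 0, c > 0, and let h : [0,∞) → [0,∞) be bijective, increasing and multiplicative (h(xy) = h(x)h(y) for all x, y ≥ 0). Let R : ℕ → [0,∞) be nondecreasing with R(n) → ∞ as n → ∞, and let T : [0,∞) → ℕ be nondecreasing with T(r) → ∞ as r → ∞, such that T(R(n)) ≤ n for all n ∈ ℕ and R(T(r)) ≥ r for all r ∈ [0,∞). Then the following are equivalent: (i) there exists N ∈ ℕ such that R(n) ≤ c·h(n) for all n ≥ N; (ii) there exists r₀ ∈ ℕ such that T(a·r) ≥ h^{−1}(a/c)·h^{−1}(r) for all r ≥ r₀. -/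
open Filter

/-- for `a, c > 0` and a bijective, increasing, multiplicative
`h : [0,∞) → [0,∞)`, and nondecreasing `R : ℕ → [0,∞)`, `T : [0,∞) → ℕ` tending to `∞`
with `T(R(n)) ≤ n` and `R(T(r)) ≥ r`, the bound `R(n) ≤ c·h(n)` eventually is equivalent
to the bound `T(a·r) ≥ h⁻¹(a/c)·h⁻¹(r)` eventually. -/
theorem stmt6 (a c : NNReal) (ha : 0 < a) (hc : 0 < c)
    (h : NNReal → NNReal) (hbij : Function.Bijective h) (hmono : StrictMono h)
    (hmul : ∀ x y : NNReal, h (x * y) = h x * h y)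
    (R : ℕ → NNReal) (hR : Monotone R) (hRtop : Tendsto R atTop atTop)
    (T : NNReal → ℕ) (hT : Monotone T) (hTtop : Tendsto T atTop atTop)
    (hTR : ∀ n : ℕ, T (R n) ≤ n) (hRT : ∀ r : NNReal, r ≤ R (T r)) :
    (∃ N : ℕ, ∀ n : ℕ, N ≤ n → R n ≤ c * h (n : NNReal)) ↔
    (∃ r₀ : ℕ, ∀ r : NNReal, (r₀ : NNReal) ≤ r →
      Function.invFun h (a / c) * Function.invFun h r ≤ T (a * r)) := by
  set g := Function.invFun h with hgdef
  have hg : ∀ x, h (g x) = x := fun x => Function.rightInverse_invFun hbij.2 x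
  constructor
  · rintro ⟨N, hN⟩
    obtain ⟨M, hM⟩ := eventually_atTop.1 (hTtop.eventually (eventually_ge_atTop N))
    refine ⟨⌈(M / a : NNReal)⌉₊, fun r hr => ?_⟩
    have har : M ≤ a * r := by
      have h1 : (M / a : NNReal) ≤ r := le_trans (Nat.le_ceil _) hr
      calc M = a * (M / a) := by rw [mul_div_cancel₀ _ ha.ne']
        _ ≤ a * r := by exact mul_le_mul_right h1 a
    have hTN : N ≤ T (a * r) := hM _ har
    by_contra hcon
    push_neg at hcon
    have h2 : h ((T (a * r) : NNReal)) < h (g (a / c) * g r) := hmono hcon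
    rw [hmul, hg, hg] at h2
    have h3 : R (T (a * r)) ≤ c * h ((T (a * r) : NNReal)) := hN _ hTN
    have h4 : c * h ((T (a * r) : NNReal)) < c * (a / c * r) :=
      mul_lt_mul_of_pos_left h2 hc
    have h5 : c * (a / c * r) = a * r := by
      rw [← mul_assoc, mul_div_cancel₀ _ hc.ne']
    have := lt_of_le_of_lt (le_trans (hRT (a * r)) h3) h4
    rw [h5] at this
    exact absurd this (lt_irrefl _)
  · rintro ⟨r₀, hr₀⟩
    obtain ⟨N, hN⟩ := eventually_atTop.1 (hRtop.eventually (eventually_ge_atTop (a * r₀)))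
    refine ⟨N, fun n hn => ?_⟩
    set r := R n / a with hrdef
    have hrge : (r₀ : NNReal) ≤ r := by
      rw [hrdef, le_div_iff₀ ha, mul_comm]
      exact hN n hn
    have har : a * r = R n := by rw [hrdef, mul_div_cancel₀ _ ha.ne']
    have key : g (a / c) * g r ≤ (T (a * r) : NNReal) := hr₀ r hrge
    have hTn : T (a * r) ≤ n := by rw [har]; exact hTR n
    have key2 : g (a / c) * g r ≤ (n : NNReal) :=
      key.trans (by exact_mod_cast hTn)
    have h6 : h (g (a / c) * g r) ≤ h (n : NNReal) := hmono.monotone key2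
    rw [hmul, hg, hg] at h6
    have h7 : a / c * r = R n / c := by
      rw [hrdef, div_mul_div_comm, mul_comm c a, ← div_mul_div_comm,
        div_self ha.ne', one_mul]
    rw [h7, div_le_iff₀ hc, mul_comm] at h6
    exact h6
end

section
/- Let n ≥ 2 be an integer, let 0 < p < 1/2, and let Y_1, …, Y_n be independent random variables, each geometrically distributed with parameter p, i.e. ℙ(Y_i = k) = p(1−p)^{k−1} for every integer k ≥ 1. Then for every real a ≥ 2p: ℙ( Y_1 + … + Y_n ≤ a·n/p ) ≤ (2a·e²)^n. -/
/-!
Chernoff bound at `t = -p/a`. The moment generating function of a geometric variable is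
`E[e^{-sY}] = p e^{-s} / (1 - (1 - p) e^{-s})`, and `1 + s ≤ e^s` bounds it by `p / s`.
For `s = p/a` this gives `ℙ(∑ Yᵢ ≤ an/p) ≤ e^{s·an/p} (p/s)^n = (e a)^n ≤ (2 a e²)^n`.
-/

open MeasureTheory ProbabilityTheory Real

section NatValued

variable {Ω : Type*} [MeasurableSpace Ω] {P : Measure Ω} [IsFiniteMeasure P] {Y : Ω → ℕ}
  {t : ℝ}

lemma integrable_exp_mul_natCast (hY : Measurable Y) (ht : t ≤ 0) :
    Integrable (fun ω => exp (t * Y ω)) P := by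
  refine (integrable_const (1 : ℝ)).mono' (by fun_prop) (ae_of_all _ fun ω => ?_)
  rw [norm_of_nonneg (exp_pos _).le, exp_le_one_iff]
  exact mul_nonpos_of_nonpos_of_nonneg ht (Nat.cast_nonneg _)

lemma mgf_natCast_eq_tsum (hY : Measurable Y) (ht : t ≤ 0) :
    mgf (fun ω => (Y ω : ℝ)) P t = ∑' k : ℕ, P.real {ω | Y ω = k} * exp (t * k) := by
  have hint : Integrable (fun k : ℕ => exp (t * k)) (P.map Y) :=
    (integrable_map_measure (by fun_prop) hY.aemeasurable).mpr
      (integrable_exp_mul_natCast hY ht)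
  rw [mgf, ← integral_map (f := fun k : ℕ => exp (t * k)) hY.aemeasurable (by fun_prop),
    integral_countable hint]
  congr! 2 with k
  rw [map_measureReal_apply hY (measurableSet_singleton k)]
  rfl

end NatValued

lemma hasSum_geometric_pgf {p r : ℝ} (hp0 : 0 < p) (hp1 : p ≤ 1) (hr0 : 0 ≤ r) (hr1 : r ≤ 1) :
    HasSum (fun k : ℕ => p * (1 - p) ^ k * r ^ (k + 1)) (p * r / (1 - (1 - p) * r)) := by
  have hq0 : 0 ≤ (1 - p) * r := mul_nonneg (sub_nonneg.mpr hp1) hr0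
  have hq1 : (1 - p) * r < 1 := by nlinarith
  have h := (hasSum_geometric_of_lt_one hq0 hq1).mul_left (p * r)
  have e : (fun k : ℕ => p * r * ((1 - p) * r) ^ k) = fun k => p * (1 - p) ^ k * r ^ (k + 1) :=
    funext fun k => by rw [mul_pow]; ring
  rwa [div_eq_mul_inv, ← e]

section Geometric

variable {Ω : Type*} [MeasurableSpace Ω] {P : Measure Ω} [IsProbabilityMeasure P] {p : ℝ}
  {Y : Ω → ℕ}

lemma tsum_measure_fiber_eq_one (hY : Measurable Y) : ∑' k : ℕ, P {ω | Y ω = k} = 1 := by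
  rw [← measure_iUnion (f := fun k : ℕ => {ω | Y ω = k}) (fun i j hij => ?_)
    fun k => hY (measurableSet_singleton k)]
  · rw [Set.iUnion_eq_univ_iff.mpr fun ω => ⟨Y ω, rfl⟩, measure_univ]
  · exact Set.disjoint_left.mpr fun ω (hi : Y ω = i) (hj : Y ω = j) => hij (hi ▸ hj)

lemma measure_eq_zero_of_geometric (hp0 : 0 < p) (hp1 : p ≤ 1) (hY : Measurable Y)
    (hgeom : ∀ k : ℕ, 1 ≤ k → P {ω | Y ω = k} = ENNReal.ofReal (p * (1 - p) ^ (k - 1))) :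
    P {ω | Y ω = 0} = 0 := by
  have hreal : HasSum (fun k : ℕ => p * (1 - p) ^ k) 1 := by
    simpa [hp0.ne'] using hasSum_geometric_pgf hp0 hp1 zero_le_one le_rfl
  have htail : ∑' k : ℕ, P {ω | Y ω = k + 1} = 1 := by
    simp_rw [hgeom _ (Nat.le_add_left 1 _), Nat.add_sub_cancel]
    rw [← ENNReal.ofReal_tsum_of_nonneg (fun k => by positivity) hreal.summable,
      hreal.tsum_eq, ENNReal.ofReal_one]
  have h := tsum_measure_fiber_eq_one (P := P) hY
  rw [tsum_eq_zero_add' ENNReal.summable, htail] at h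
  exact (ENNReal.add_left_inj ENNReal.one_ne_top).mp (h.trans (zero_add 1).symm)

lemma mgf_geometric (hp0 : 0 < p) (hp1 : p ≤ 1) (hY : Measurable Y)
    (hgeom : ∀ k : ℕ, 1 ≤ k → P {ω | Y ω = k} = ENNReal.ofReal (p * (1 - p) ^ (k - 1)))
    {t : ℝ} (ht : t ≤ 0) :
    mgf (fun ω => (Y ω : ℝ)) P t = p * exp t / (1 - (1 - p) * exp t) := by
  have hterm : ∀ k : ℕ, P.real {ω | Y ω = k + 1} * exp (t * ↑(k + 1))
      = p * (1 - p) ^ k * exp t ^ (k + 1) := fun k => by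
    have hq : 0 ≤ (1 - p) ^ k := pow_nonneg (sub_nonneg.mpr hp1) k
    rw [measureReal_def, hgeom _ (Nat.le_add_left 1 _), Nat.add_sub_cancel,
      ENNReal.toReal_ofReal (mul_nonneg hp0.le hq), mul_comm t, exp_nat_mul]
  have hsum : HasSum (fun k : ℕ => P.real {ω | Y ω = k + 1} * exp (t * ↑(k + 1)))
      (p * exp t / (1 - (1 - p) * exp t)) := by
    simp only [hterm]
    exact hasSum_geometric_pgf hp0 hp1 (exp_pos t).le (exp_le_one_iff.mpr ht)
  rw [mgf_natCast_eq_tsum hY ht,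
    (HasSum.zero_add (f := fun k : ℕ => P.real {ω | Y ω = k} * exp (t * k)) hsum).tsum_eq]
  simp [measureReal_def, measure_eq_zero_of_geometric hp0 hp1 hY hgeom]

lemma mgf_geometric_neg_le (hp0 : 0 < p) (hp1 : p ≤ 1) (hY : Measurable Y)
    (hgeom : ∀ k : ℕ, 1 ≤ k → P {ω | Y ω = k} = ENNReal.ofReal (p * (1 - p) ^ (k - 1)))
    {s : ℝ} (hs : 0 < s) :
    mgf (fun ω => (Y ω : ℝ)) P (-s) ≤ p / s := by
  rw [mgf_geometric hp0 hp1 hY hgeom (neg_nonpos.mpr hs.le)]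
  have hr0 := exp_pos (-s)
  have hr1 : exp (-s) < 1 := exp_lt_one_iff.mpr (neg_lt_zero.mpr hs)
  have hrs : exp (-s) * (s + 1) ≤ 1 := by
    calc exp (-s) * (s + 1) ≤ exp (-s) * exp s :=
          mul_le_mul_of_nonneg_left (add_one_le_exp s) hr0.le
      _ = 1 := by rw [← exp_add, neg_add_cancel, exp_zero]
  rw [div_le_div_iff₀ (by nlinarith) hs]
  nlinarith [mul_le_mul_of_nonneg_left hrs hp0.le]

end Geometric

theorem ProbabilityTheory.iIndepFun.measureReal_sum_le_le_exp_mul_prod_mgf {Ω ι : Type*}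
    [MeasurableSpace Ω] {P : Measure Ω} [IsProbabilityMeasure P] {X : ι → Ω → ℝ}
    (h_indep : iIndepFun X P) (h_meas : ∀ i, Measurable (X i)) (s : Finset ι) {t : ℝ}
    (ht : t ≤ 0) (h_int : ∀ i ∈ s, Integrable (fun ω => exp (t * X i ω)) P) (ε : ℝ) :
    P.real {ω | ∑ i ∈ s, X i ω ≤ ε} ≤ exp (-t * ε) * ∏ i ∈ s, mgf (X i) P t := by
  rw [← h_indep.mgf_sum h_meas]
  simpa only [Finset.sum_apply] using
    measure_le_le_exp_mul_mgf ε ht (h_indep.integrable_exp_mul_sum h_meas h_int)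

theorem stmt9_general {Ω : Type*} [MeasurableSpace Ω] (P : Measure Ω) [IsProbabilityMeasure P]
    (n : ℕ) (p : ℝ) (hp0 : 0 < p) (hp : p < 1 / 2)
    (Y : Fin n → Ω → ℕ) (hmeas : ∀ i, Measurable (Y i))
    (hindep : iIndepFun Y P)
    (hgeom : ∀ i, ∀ k : ℕ, 1 ≤ k →
      P {ω | Y i ω = k} = ENNReal.ofReal (p * (1 - p) ^ (k - 1)))
    (a : ℝ) (ha : 2 * p ≤ a) :
    P {ω | ((∑ i, Y i ω : ℕ) : ℝ) ≤ a * n / p} ≤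
      ENNReal.ofReal ((2 * a * Real.exp 2) ^ n) := by
  have ha0 : 0 < a := by linarith
  have hs : 0 < p / a := div_pos hp0 ha0
  have ht : -(p / a) ≤ 0 := neg_nonpos.mpr hs.le
  have hindep' : iIndepFun (fun i ω => (Y i ω : ℝ)) P :=
    hindep.comp (fun _ k => (k : ℝ)) fun _ => by fun_prop
  have hmgf : ∏ i, mgf (fun ω => (Y i ω : ℝ)) P (-(p / a)) ≤ a ^ n := by
    calc ∏ i, mgf (fun ω => (Y i ω : ℝ)) P (-(p / a)) ≤ ∏ _i : Fin n, p / (p / a) :=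
          Finset.prod_le_prod (fun i _ => mgf_nonneg)
            fun i _ => mgf_geometric_neg_le hp0 (by linarith) (hmeas i) (hgeom i) hs
      _ = a ^ n := by simp [hp0.ne']
  have hchernoff : P.real {ω | ∑ i, (Y i ω : ℝ) ≤ a * n / p} ≤ exp n * a ^ n := by
    refine (hindep'.measureReal_sum_le_le_exp_mul_prod_mgf (fun i => by fun_prop) _ ht
      (fun i _ => integrable_exp_mul_natCast (hmeas i) ht) _).trans ?_
    rw [show -(-(p / a)) * (a * n / p) = n by field_simp]
    exact mul_le_mul_of_nonneg_left hmgf (exp_pos _).le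
  have hbound : exp n * a ^ n ≤ (2 * a * exp 2) ^ n := by
    rw [← mul_one (n : ℝ), exp_nat_mul, ← mul_pow, mul_comm]
    have he : exp 1 ≤ exp 2 := exp_le_exp.mpr one_le_two
    exact pow_le_pow_left₀ (by positivity) (by nlinarith [exp_pos 1]) n
  rw [ENNReal.le_ofReal_iff_toReal_le (measure_ne_top P _) (by positivity)]
  push_cast
  exact hchernoff.trans hbound

/-- if `Y_1, …, Y_n` (`n ≥ 2`) are independent geometric random variables
with parameter `p ∈ (0,1/2)`, then for every `a ≥ 2p`,
`ℙ(Y_1 + … + Y_n ≤ a·n/p) ≤ (2a·e²)^n`. -/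
theorem stmt9 {Ω : Type*} [MeasurableSpace Ω] (P : Measure Ω) [IsProbabilityMeasure P]
    (n : ℕ) (hn : 2 ≤ n) (p : ℝ) (hp0 : 0 < p) (hp : p < 1 / 2)
    (Y : Fin n → Ω → ℕ) (hmeas : ∀ i, Measurable (Y i))
    (hindep : iIndepFun Y P)
    (hgeom : ∀ i, ∀ k : ℕ, 1 ≤ k →
      P {ω | Y i ω = k} = ENNReal.ofReal (p * (1 - p) ^ (k - 1)))
    (a : ℝ) (ha : 2 * p ≤ a) :
    P {ω | ((∑ i, Y i ω : ℕ) : ℝ) ≤ a * n / p} ≤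
      ENNReal.ofReal ((2 * a * Real.exp 2) ^ n) :=
  stmt9_general P n p hp0 hp Y hmeas hindep hgeom a ha
end

section
/- Let d ≥ 1 and let p, q ∈ ℤ^d with ‖p − q‖ = 1. Then for every point x on the closed segment from p to q (i.e. x = (1−s)p + sq for some s ∈ [0,1]), the closed Euclidean ball B(x, 1/2) is contained in C_p ∪ C_q, where C_y = y + [−1/2, 1/2]^d denotes the closed unit cube centred at y ∈ ℤ^d. -/
open MeasureTheory Filter

/-- Euclidean norm on `ℝ^d`. -/
noncomputable def rNorm {d : ℕ} (x : Fin d → ℝ) : ℝ :=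
  Real.sqrt (∑ i, (x i) ^ 2)

/-
Two nearest neighbours `p, q ∈ ℤ^d` differ in a single coordinate `i₀`, and there by at most `1`.
A point of the ball has every coordinate within `1/2` of the centre; off `i₀` the centre's coordinate
is `p i = q i`, and at `i₀` the interval of length `2` around the segment is covered by the two
intervals of length `1` around `p i₀` and `q i₀`, split at their midpoint.
-/

lemma abs_apply_le_rNorm {d : ℕ} (x : Fin d → ℝ) (i : Fin d) : |x i| ≤ rNorm x := by
  rw [rNorm, ← Real.sqrt_sq_eq_abs]
  exact Real.sqrt_le_sqrt <| Finset.single_le_sum (fun j _ => sq_nonneg (x j)) (Finset.mem_univ i)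

lemma abs_apply_le_zNorm {d : ℕ} (v : Fin d → ℤ) (i : Fin d) : |(v i : ℝ)| ≤ zNorm v :=
  abs_apply_le_rNorm (fun j => (v j : ℝ)) i

lemma one_le_intCast_sq {a : ℤ} (ha : a ≠ 0) : (1 : ℝ) ≤ (a : ℝ) ^ 2 := by
  rw [one_le_sq_iff_one_le_abs, ← Int.cast_abs]
  exact_mod_cast Int.one_le_abs ha

lemma apply_eq_zero_of_zNorm_eq_one {d : ℕ} {v : Fin d → ℤ} (hv : zNorm v = 1) {i j : Fin d}
    (hij : i ≠ j) (hi : v i ≠ 0) : v j = 0 := by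
  have hsum : ∑ k, (v k : ℝ) ^ 2 = 1 := by
    rwa [zNorm, Real.sqrt_eq_one] at hv
  have hpair : (v i : ℝ) ^ 2 + (v j : ℝ) ^ 2 ≤ 1 := by
    rw [← hsum, ← Finset.sum_pair (f := fun k => (v k : ℝ) ^ 2) hij]
    exact Finset.sum_le_sum_of_subset_of_nonneg (Finset.subset_univ _)
      fun k _ _ => sq_nonneg _
  by_contra hj
  linarith [one_le_intCast_sq hi, one_le_intCast_sq hj]

lemma abs_sub_le_half_or_of_abs_sub_lineMap_le_half {a b z s : ℝ} (hs : s ∈ Set.Icc (0 : ℝ) 1)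
    (hab : |a - b| ≤ 1) (hz : |z - ((1 - s) * a + s * b)| ≤ 1 / 2) :
    |z - a| ≤ 1 / 2 ∨ |z - b| ≤ 1 / 2 := by
  obtain ⟨hs0, hs1⟩ := hs
  rw [abs_le] at hab hz
  rcases le_total a b with hab' | hab' <;> rcases le_total z ((a + b) / 2) with hm | hm
  · left; rw [abs_le]; constructor <;> nlinarith
  · right; rw [abs_le]; constructor <;> nlinarith
  · right; rw [abs_le]; constructor <;> nlinarith
  · left; rw [abs_le]; constructor <;> nlinarith

lemma forall_abs_sub_le_half_or_of_eqOn_compl_singleton {d : ℕ} {x y z : Fin d → ℝ} {s : ℝ}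
    (hs : s ∈ Set.Icc (0 : ℝ) 1) (i₀ : Fin d) (hoff : Set.EqOn x y {i₀}ᶜ)
    (h₀ : |x i₀ - y i₀| ≤ 1) (hz : ∀ i, |z i - ((1 - s) * x i + s * y i)| ≤ 1 / 2) :
    (∀ i, |z i - x i| ≤ 1 / 2) ∨ (∀ i, |z i - y i| ≤ 1 / 2) := by
  have hcoord : ∀ i, i ≠ i₀ → |z i - x i| ≤ 1 / 2 ∧ |z i - y i| ≤ 1 / 2 := by
    intro i hi
    have hxy : x i = y i := hoff (Set.mem_compl_singleton_iff.mpr hi)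
    have h := hz i
    rw [← hxy, show (1 - s) * x i + s * x i = x i by ring] at h
    exact ⟨h, hxy ▸ h⟩
  rcases abs_sub_le_half_or_of_abs_sub_lineMap_le_half hs h₀ (hz i₀) with h | h
  · left
    intro i
    rcases eq_or_ne i i₀ with rfl | hi
    exacts [h, (hcoord i hi).1]
  · right
    intro i
    rcases eq_or_ne i i₀ with rfl | hi
    exacts [h, (hcoord i hi).2]

theorem stmt16_general {d : ℕ} (p q : Fin d → ℤ)
    (hpq : zNorm (p - q) = 1) (s : ℝ) (hs : s ∈ Set.Icc (0 : ℝ) 1) :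
    {z : Fin d → ℝ |
        rNorm (z - ((1 - s) • (fun i => (p i : ℝ)) + s • fun i => (q i : ℝ))) ≤ 1 / 2} ⊆
      {z : Fin d → ℝ | ∀ i, |z i - (p i : ℝ)| ≤ 1 / 2} ∪
      {z : Fin d → ℝ | ∀ i, |z i - (q i : ℝ)| ≤ 1 / 2} := by
  intro z hz
  obtain ⟨i₀, hi₀⟩ : ∃ i₀, (p - q) i₀ ≠ 0 := by
    by_contra! h
    simp [zNorm, h] at hpq
  have hoff : Set.EqOn (fun i => (p i : ℝ)) (fun i => (q i : ℝ)) {i₀}ᶜ := fun i hi => by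
    have := apply_eq_zero_of_zNorm_eq_one hpq (Ne.symm hi) hi₀
    show (p i : ℝ) = q i
    exact_mod_cast sub_eq_zero.mp this
  have h₀ : |(p i₀ : ℝ) - q i₀| ≤ 1 := by
    simpa [← hpq] using abs_apply_le_zNorm (p - q) i₀
  exact forall_abs_sub_le_half_or_of_eqOn_compl_singleton hs i₀ hoff h₀ fun i =>
    (abs_apply_le_rNorm _ i).trans hz

/-- if `p, q ∈ ℤ^d` are nearest neighbours, then for every point `x` on the
closed segment from `p` to `q`, the closed Euclidean ball `B(x, 1/2)` is contained in the
union `C_p ∪ C_q` of the closed unit cubes centred at `p` and `q`. -/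
theorem stmt16 {d : ℕ} (hd : 1 ≤ d) (p q : Fin d → ℤ)
    (hpq : zNorm (p - q) = 1) (s : ℝ) (hs : s ∈ Set.Icc (0 : ℝ) 1) :
    {z : Fin d → ℝ |
        rNorm (z - ((1 - s) • (fun i => (p i : ℝ)) + s • fun i => (q i : ℝ))) ≤ 1 / 2} ⊆
      {z : Fin d → ℝ | ∀ i, |z i - (p i : ℝ)| ≤ 1 / 2} ∪
      {z : Fin d → ℝ | ∀ i, |z i - (q i : ℝ)| ≤ 1 / 2} :=
  stmt16_general p q hpq s hs
end
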